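/- arXiv:2601.22482 — 2 statements merged into one kernel-verified Lean document; each statement's English description precedes it below -/
import Mathlib

section
/- Let G be the K×N generator matrix of an (N,K) extended Reed-Solomon code over F_{2^n} (N = 2^n), P an invertible N×N binary permutation matrix, E an invertible K×K matrix, G_p = F^{⊗n} the polar transform, M = E·G·P^{-1}·G_p, a = ⌈-log₂(K/N)⌉, and D = {2^a−1, 2·2^a−1, ..., 2^n−1}. Then the 2^{n-a} columns of M indexed by D are linearly independent, i.e., rank(M^D) = 2^{n-a}. -/
open Matrix

/-- The `t`-th binary digit of `i`, as an element of `Fin 2`. -/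
def bit (t i : ℕ) : Fin 2 := ⟨i / 2 ^ t % 2, Nat.mod_lt _ (by norm_num)⟩

/-- The Arıkan kernel `F = [[1,0],[1,1]]` over a commutative semiring. -/
def arikanKernel (R : Type*) [CommSemiring R] : Matrix (Fin 2) (Fin 2) R := !![1, 0; 1, 1]

/-- The polar transform `G_p = F^{⊗n}`, a `2^n × 2^n` matrix with `0/1` entries,
embedded in the ring `R`. -/
def polarG (R : Type*) [CommSemiring R] (n : ℕ) : Matrix (Fin (2 ^ n)) (Fin (2 ^ n)) R :=
  fun i j => ∏ t ∈ Finset.range n, arikanKernel R (bit t i.val) (bit t j.val)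

/-- The `j`-th element of `D = {2^a − 1, 2·2^a − 1, …, 2^n − 1}`, namely
`(j+1)·2^a − 1 = j·2^a + (2^a − 1)`, as an element of `Fin (2^n)`. -/
def dIdx {n a : ℕ} (ha : a ≤ n) (j : Fin (2 ^ (n - a))) : Fin (2 ^ n) :=
  ⟨j.val * 2 ^ a + (2 ^ a - 1), by
    have hj := j.isLt
    have h2 : 0 < 2 ^ a := pow_pos (by norm_num) a
    have h3 : (j.val + 1) * 2 ^ a ≤ 2 ^ n := by
      calc (j.val + 1) * 2 ^ a ≤ 2 ^ (n - a) * 2 ^ a := Nat.mul_le_mul_right _ hj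
        _ = 2 ^ n := by rw [← pow_add, Nat.sub_add_cancel ha]
    have h4 : j.val * 2 ^ a + 2 ^ a = (j.val + 1) * 2 ^ a := by ring
    omega⟩

/-! The entry `G_p[i, j]` vanishes unless the binary digits of `j` are among those of `i`.
Since every element of `D` ends in `a` binary ones, the columns of `G_p` indexed by `D` vanish
outside the rows `D`, and the `D × D` block of `G_p` is lower unitriangular. So if `M^D c = 0`,
the vector `P⁻¹ G_p^D c` lies in the kernel of `G` and is supported on `2^{n-a} ≤ K`
coordinates; the MDS property forces it to vanish, and then the unitriangular block forces
`c = 0`. -/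

section MDS

variable {F ι m : Type*} [CommRing F] [Fintype ι]

theorem eq_zero_of_mulVec_eq_zero_of_linearIndepOn {G : Matrix m ι F} {s : Finset ι}
    (hs : LinearIndepOn F Gᵀ (s : Set ι)) {w : ι → F} (hw : ∀ i ∉ s, w i = 0)
    (hGw : G *ᵥ w = 0) : w = 0 := by
  have hsum : ∑ j : s, w j • Gᵀ j = 0 := by
    rw [← hGw, mulVec_eq_sum, Finset.sum_coe_sort s (fun j => w j • Gᵀ j)]
    simp only [op_smul_eq_smul]
    exact Finset.sum_subset (Finset.subset_univ s) fun i _ hi => by rw [hw i hi, zero_smul]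
  funext i
  by_cases hi : i ∈ s
  · exact Fintype.linearIndependent_iff.mp hs (fun j => w j) hsum ⟨i, hi⟩
  · exact hw i hi

theorem eq_zero_of_mulVec_eq_zero_of_card_le [DecidableEq ι] {K : ℕ} {G : Matrix m ι F}
    (hMDS : ∀ s : Finset ι, s.card = K → LinearIndepOn F Gᵀ (s : Set ι))
    (hK : K ≤ Fintype.card ι) {s : Finset ι} (hs : s.card ≤ K) {w : ι → F}
    (hw : ∀ i ∉ s, w i = 0) (hGw : G *ᵥ w = 0) : w = 0 := by
  obtain ⟨t, hst, ht⟩ := Finset.exists_superset_card_eq hs hK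
  exact eq_zero_of_mulVec_eq_zero_of_linearIndepOn (hMDS t ht)
    (fun i hi => hw i fun his => hi (hst his)) hGw

end MDS

theorem Matrix.inv_permMatrix {ι R : Type*} [DecidableEq ι] [Fintype ι] [CommRing R]
    (σ : Equiv.Perm ι) : (σ.permMatrix R)⁻¹ = σ⁻¹.permMatrix R :=
  inv_eq_right_inv (by rw [← permMatrix_mul, inv_mul_cancel, permMatrix_one])

theorem Nat.exists_testBit_of_lt {m j : ℕ} (h : m < j) :
    ∃ t, m.testBit t = false ∧ j.testBit t = true := by
  by_contra! hc
  have hand : j &&& m = j := Nat.eq_of_testBit_eq fun t => by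
    rw [Nat.testBit_and]
    cases hjt : j.testBit t
    · rfl
    · cases hmt : m.testBit t
      · exact absurd hjt (hc t hmt)
      · rfl
  have : j ≤ m := hand ▸ Nat.and_le_right
  omega

theorem two_pow_sub_sub_log_le {n K : ℕ} (hK : K ≠ 0) (hKN : K ≤ 2 ^ n) :
    2 ^ (n - (n - Nat.log 2 K)) ≤ K := by
  have hlog : Nat.log 2 K ≤ n := (Nat.log_mono_right hKN).trans (Nat.log_pow one_lt_two n).le
  rw [Nat.sub_sub_self hlog]
  exact Nat.pow_log_le_self 2 hK

section PolarTransform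

variable {R : Type*} [CommSemiring R]

theorem bit_eq_one_iff {t i : ℕ} : bit t i = 1 ↔ i.testBit t = true := by
  rw [Nat.testBit_eq_decide_div_mod_eq, decide_eq_true_iff, Fin.ext_iff]
  rfl

theorem bit_eq_zero_iff {t i : ℕ} : bit t i = 0 ↔ i.testBit t = false := by
  rw [Nat.testBit_eq_decide_div_mod_eq, decide_eq_false_iff_not, Fin.ext_iff]
  exact Nat.mod_two_ne_one.symm

theorem arikanKernel_self (x : Fin 2) : arikanKernel R x x = 1 := by
  fin_cases x <;> simp [arikanKernel]

theorem polarG_self {n : ℕ} (i : Fin (2 ^ n)) : polarG R n i i = 1 :=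
  Finset.prod_eq_one fun _ _ => arikanKernel_self _

theorem polarG_eq_zero_of_testBit {n t : ℕ} {i j : Fin (2 ^ n)} (ht : t < n)
    (hi : i.val.testBit t = false) (hj : j.val.testBit t = true) : polarG R n i j = 0 := by
  refine Finset.prod_eq_zero (Finset.mem_range.mpr ht) ?_
  rw [bit_eq_zero_iff.mpr hi, bit_eq_one_iff.mpr hj]
  simp [arikanKernel]

theorem polarG_isLowerTriangular (n : ℕ) : (polarG R n).IsLowerTriangular := by
  intro i j hij
  obtain ⟨t, hit, hjt⟩ := Nat.exists_testBit_of_lt (show i.val < j.val from hij)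
  have ht : t < n := by
    by_contra! h
    rw [Nat.testBit_lt_two_pow (j.isLt.trans_le (Nat.pow_le_pow_right two_pos h))] at hjt
    exact Bool.false_ne_true hjt
  exact polarG_eq_zero_of_testBit ht hit hjt

end PolarTransform

section PolarColumns

variable {n a : ℕ} (ha : a ≤ n)

theorem testBit_dIdx (j : Fin (2 ^ (n - a))) (t : ℕ) :
    (dIdx ha j).val.testBit t = if t < a then true else j.val.testBit (t - a) := by
  show (j.val * 2 ^ a + (2 ^ a - 1)).testBit t = _
  rw [mul_comm, Nat.testBit_two_pow_mul_add _ (Nat.sub_lt (Nat.two_pow_pos a) one_pos)]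
  by_cases h : t < a <;> simp [h]

theorem dIdx_strictMono : StrictMono (dIdx ha) := fun j₁ j₂ h =>
  show j₁.val * 2 ^ a + (2 ^ a - 1) < j₂.val * 2 ^ a + (2 ^ a - 1) from
    Nat.add_lt_add_right (Nat.mul_lt_mul_of_pos_right h (Nat.two_pow_pos a)) _

theorem mem_range_dIdx_of_testBit {i : Fin (2 ^ n)} (h : ∀ t < a, i.val.testBit t = true) :
    i ∈ Set.range (dIdx ha) := by
  have hlt : i.val / 2 ^ a < 2 ^ (n - a) := by
    rw [Nat.div_lt_iff_lt_mul (Nat.two_pow_pos a), ← pow_add, Nat.sub_add_cancel ha]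
    exact i.isLt
  have hmod : i.val % 2 ^ a = 2 ^ a - 1 := Nat.eq_of_testBit_eq fun t => by
    rw [Nat.testBit_mod_two_pow, Nat.testBit_two_pow_sub_one]
    by_cases ht : t < a <;> simp [ht, h]
  refine ⟨⟨i.val / 2 ^ a, hlt⟩, Fin.ext ?_⟩
  show i.val / 2 ^ a * 2 ^ a + (2 ^ a - 1) = i.val
  rw [← hmod, mul_comm, Nat.div_add_mod]

theorem polarG_submatrix_dIdx_mulVec_eq_zero {R : Type*} [CommSemiring R] {i : Fin (2 ^ n)}
    (hi : i ∉ Set.range (dIdx ha)) (c : Fin (2 ^ (n - a)) → R) :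
    ((polarG R n).submatrix id (dIdx ha) *ᵥ c) i = 0 := by
  obtain ⟨t, ht, hit⟩ : ∃ t < a, i.val.testBit t = false := by
    by_contra! h
    exact hi (mem_range_dIdx_of_testBit ha fun t ht => Bool.not_eq_false _ ▸ h t ht)
  simp only [mulVec, dotProduct]
  refine Finset.sum_eq_zero fun j _ => ?_
  rw [submatrix_apply, id_eq, polarG_eq_zero_of_testBit (ht.trans_le ha) hit
    (by simp [testBit_dIdx, ht]), zero_mul]

theorem det_polarG_submatrix_dIdx {R : Type*} [CommRing R] :
    ((polarG R n).submatrix (dIdx ha) (dIdx ha)).det = 1 := by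
  have hlow : ((polarG R n).submatrix (dIdx ha) (dIdx ha)).IsLowerTriangular :=
    fun i j hij => polarG_isLowerTriangular n ((dIdx_strictMono ha).lt_iff_lt.mpr hij)
  rw [det_of_isLowerTriangular _ hlow]
  exact Finset.prod_eq_one fun i _ => polarG_self _

theorem eq_zero_of_polarG_submatrix_dIdx_mulVec_eq_zero {R : Type*} [Field R]
    {c : Fin (2 ^ (n - a)) → R} (hc : (polarG R n).submatrix id (dIdx ha) *ᵥ c = 0) :
    c = 0 := by
  have hdet : IsUnit ((polarG R n).submatrix (dIdx ha) (dIdx ha)) := by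
    rw [isUnit_iff_isUnit_det, det_polarG_submatrix_dIdx]
    exact isUnit_one
  refine mulVec_injective_iff_isUnit.mpr hdet ?_
  rw [mulVec_zero]
  exact funext fun j => congrFun hc (dIdx ha j)

end PolarColumns

/-- Let `G` be the `K × 2^n` generator matrix of an `(N = 2^n, K)` extended Reed–Solomon
code over `F_{2^n}` (so that every `K` columns of `G` are linearly independent),
`P` the permutation matrix of a permutation `σ`, `E` an invertible `K×K` matrix,
`G_p = F^{⊗n}` the polar transform, `M = E·G·P⁻¹·G_p`, `a = ⌈−log₂(K/N)⌉ = n − ⌊log₂ K⌋`,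
and `D = {2^a−1, 2·2^a−1, …, 2^n−1}`.  Then the `2^{n−a}` columns of `M` indexed by `D`
are linearly independent, i.e. `rank (M^D) = 2^{n−a}`. -/
theorem rank_pretransformed_submatrix {n K : ℕ} (hK1 : 1 ≤ K) (hKN : K ≤ 2 ^ n)
    (Fq : Type*) [Field Fq]
    (G : Matrix (Fin K) (Fin (2 ^ n)) Fq)
    (hMDS : ∀ s : Finset (Fin (2 ^ n)), s.card = K →
      LinearIndependent Fq (fun j : s => fun i => G i (j : Fin (2 ^ n))))
    (σ : Equiv.Perm (Fin (2 ^ n)))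
    (E : Matrix (Fin K) (Fin K) Fq) (hE : IsUnit E)
    (a : ℕ) (ha : a = n - Nat.log 2 K)
    (M : Matrix (Fin K) (Fin (2 ^ n)) Fq)
    (hM : M = E * G * (σ.permMatrix Fq)⁻¹ * polarG Fq n) :
    (M.submatrix id (dIdx (show a ≤ n by omega))).rank = 2 ^ (n - a) := by
  have haN : a ≤ n := by omega
  have hD : 2 ^ (n - a) ≤ K := ha ▸ two_pow_sub_sub_log_le (by omega) hKN
  set B := (polarG Fq n).submatrix id (dIdx haN)
  have hMB : M.submatrix id (dIdx haN) = E * G * (σ.permMatrix Fq)⁻¹ * B := by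
    rw [hM, submatrix_mul _ _ _ _ _ Function.bijective_id, submatrix_id_id]
  have hker : LinearMap.ker (M.submatrix id (dIdx haN)).mulVecLin = ⊥ := by
    refine ker_mulVecLin_eq_bot_iff.mpr fun c hc => ?_
    rw [hMB, ← mulVec_mulVec, ← mulVec_mulVec, ← mulVec_mulVec, inv_permMatrix,
      permMatrix_mulVec] at hc
    have hG : G *ᵥ ((B *ᵥ c) ∘ ⇑σ⁻¹) = 0 :=
      mulVec_injective_iff_isUnit.mpr hE (hc.trans (mulVec_zero E).symm)
    have hsupp : ∀ i ∉ Finset.univ.image (σ ∘ dIdx haN), ((B *ᵥ c) ∘ ⇑σ⁻¹) i = 0 :=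
      fun i hi => polarG_submatrix_dIdx_mulVec_eq_zero haN
        (fun ⟨j, hj⟩ => hi (Finset.mem_image.mpr ⟨j, Finset.mem_univ _, by simp [hj]⟩)) c
    have hw := eq_zero_of_mulVec_eq_zero_of_card_le hMDS (by simpa using hKN)
      (Finset.card_image_le.trans (by simpa using hD)) hsupp hG
    refine eq_zero_of_polarG_submatrix_dIdx_mulVec_eq_zero haN (funext fun i => ?_)
    simpa using congrFun hw (σ i)
  rw [Matrix.rank, LinearMap.finrank_range_of_inj (LinearMap.ker_eq_bot.mp hker),
    Module.finrank_fin_fun]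
end

section
/- With M = E·G·P^{-1}·G_p as above, rank(M^D) = rank((G·P^{-1})^D), where (G·P^{-1})^D is the submatrix of G·P^{-1} of columns indexed by D = {2^a−1, 2·2^a−1, ..., 2^n−1}. -/
open Matrix

/-! ### Auxiliary lemmas -/

lemma bit_val (t i : ℕ) : (bit t i).val = i / 2 ^ t % 2 := rfl

lemma bit_high {a t : ℕ} (x y : ℕ) (ht : a ≤ t) (hy : y < 2 ^ a) :
    bit t (x * 2 ^ a + y) = bit (t - a) x := by
  have h2 : (0:ℕ) < 2 ^ a := pow_pos (by norm_num) a
  have hsplit : (2:ℕ) ^ t = 2 ^ a * 2 ^ (t - a) := by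
    rw [← pow_add]; congr 1; omega
  have hdiv : (x * 2 ^ a + y) / 2 ^ t = x / 2 ^ (t - a) := by
    rw [hsplit, ← Nat.div_div_eq_div_mul]
    congr 1
    rw [mul_comm x, Nat.mul_add_div h2, Nat.div_eq_of_lt hy, add_zero]
  apply Fin.ext
  simp [bit_val, hdiv]

lemma bit_low {a t : ℕ} (x y : ℕ) (ht : t < a) :
    bit t (x * 2 ^ a + y) = bit t y := by
  have h2 : (0:ℕ) < 2 ^ t := pow_pos (by norm_num) t
  have hx : x * 2 ^ a = x * 2 ^ (a - t - 1) * 2 * 2 ^ t := by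
    rw [mul_assoc, mul_assoc, ← pow_succ']
    rw [← pow_add]; congr 2; omega
  apply Fin.ext
  simp only [bit_val]
  rw [hx, add_comm, Nat.add_mul_div_right _ _ h2, Nat.add_mul_mod_self_right]

lemma bit_allones {a t : ℕ} (ht : t < a) : bit t (2 ^ a - 1) = 1 := by
  have h := Nat.testBit_two_pow_sub_one a t
  rw [Nat.testBit_eq_decide_div_mod_eq] at h
  simp only [decide_eq_true_eq, ht, decide_eq_true_iff] at h
  apply Fin.ext
  simpa [bit_val] using h

lemma eq_allones {a r : ℕ} (hr : r < 2 ^ a) (h : ∀ t < a, bit t r = 1) :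
    r = 2 ^ a - 1 := by
  apply Nat.eq_of_testBit_eq
  intro t
  rcases lt_or_ge t a with h1 | h1
  · have := h t h1
    have hv : r / 2 ^ t % 2 = 1 := congrArg Fin.val this
    rw [Nat.testBit_eq_decide_div_mod_eq, Nat.testBit_two_pow_sub_one]
    simp [hv, h1]
  · have hlt : r < 2 ^ t := lt_of_lt_of_le hr (Nat.pow_le_pow_right (by norm_num) h1)
    rw [Nat.testBit_lt_two_pow hlt, Nat.testBit_two_pow_sub_one]
    simp; omega

section kernel
variable {R : Type*} [CommSemiring R]
lemma arikan_one_one : arikanKernel R 1 1 = 1 := by simp [arikanKernel]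
lemma arikan_zero_one : arikanKernel R 0 1 = 0 := by simp [arikanKernel]
lemma arikan_diag (b : Fin 2) : arikanKernel R b b = 1 := by
  fin_cases b <;> simp [arikanKernel]
end kernel

/-- The equivalence `(q, r) ↦ q·2^a + r` between `Fin 2^(n−a) × Fin 2^a` and `Fin 2^n`. -/
def pairEquiv {n a : ℕ} (ha : a ≤ n) : Fin (2 ^ (n - a)) × Fin (2 ^ a) ≃ Fin (2 ^ n) where
  toFun p := ⟨p.1.val * 2 ^ a + p.2.val, by
    have h1 := p.1.isLt; have h2 := p.2.isLt
    have h3 : (p.1.val + 1) * 2 ^ a ≤ 2 ^ n := by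
      calc (p.1.val + 1) * 2 ^ a ≤ 2 ^ (n - a) * 2 ^ a := Nat.mul_le_mul_right _ h1
        _ = 2 ^ n := by rw [← pow_add, Nat.sub_add_cancel ha]
    nlinarith⟩
  invFun i := (⟨i.val / 2 ^ a, by
      have h1 := i.isLt
      have h2 : (0:ℕ) < 2 ^ a := pow_pos (by norm_num) a
      rw [Nat.div_lt_iff_lt_mul h2, ← pow_add, Nat.sub_add_cancel ha]; exact h1⟩,
    ⟨i.val % 2 ^ a, Nat.mod_lt _ (pow_pos (by norm_num) a)⟩)
  left_inv p := by
    have h2 : (0:ℕ) < 2 ^ a := pow_pos (by norm_num) a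
    ext
    · show (p.1.val * 2 ^ a + p.2.val) / 2 ^ a = p.1.val
      rw [mul_comm (p.1.val), Nat.mul_add_div h2, Nat.div_eq_of_lt p.2.isLt, add_zero]
    · show (p.1.val * 2 ^ a + p.2.val) % 2 ^ a = p.2.val
      rw [mul_comm (p.1.val), Nat.mul_add_mod, Nat.mod_eq_of_lt p.2.isLt]
  right_inv i := by
    apply Fin.ext
    show i.val / 2 ^ a * 2 ^ a + i.val % 2 ^ a = i.val
    rw [mul_comm, Nat.div_add_mod]

lemma pairEquiv_val {n a : ℕ} (ha : a ≤ n) (p : Fin (2 ^ (n - a)) × Fin (2 ^ a)) :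
    (pairEquiv ha p).val = p.1.val * 2 ^ a + p.2.val := rfl

lemma polar_pair {n a : ℕ} (ha : a ≤ n) {R : Type*} [CommSemiring R]
    (q : Fin (2 ^ (n - a))) (r : Fin (2 ^ a)) (j : Fin (2 ^ (n - a))) :
    polarG R n (pairEquiv ha (q, r)) (dIdx ha j) =
      if r.val = 2 ^ a - 1 then polarG R (n - a) q j else 0 := by
  have h2 : (0:ℕ) < 2 ^ a := pow_pos (by norm_num) a
  have hq : (pairEquiv ha (q, r)).val = q.val * 2 ^ a + r.val := rfl
  have hd : (dIdx ha j).val = j.val * 2 ^ a + (2 ^ a - 1) := rfl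
  have hrange : Finset.range n = Finset.range (a + (n - a)) := by congr 1; omega
  unfold polarG
  rw [hq, hd, hrange, Finset.prod_range_add]
  have hsec : ∀ t ∈ Finset.range (n - a),
      arikanKernel R (bit (a + t) (q.val * 2 ^ a + r.val))
        (bit (a + t) (j.val * 2 ^ a + (2 ^ a - 1))) =
      arikanKernel R (bit t q.val) (bit t j.val) := by
    intro t _
    rw [bit_high _ _ (Nat.le_add_right a t) r.isLt,
        bit_high _ _ (Nat.le_add_right a t) (by omega)]
    simp [Nat.add_sub_cancel_left]
  rw [Finset.prod_congr rfl hsec]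
  have hfst : ∀ t ∈ Finset.range a,
      arikanKernel R (bit t (q.val * 2 ^ a + r.val))
        (bit t (j.val * 2 ^ a + (2 ^ a - 1))) =
      arikanKernel R (bit t r.val) 1 := by
    intro t htm
    have ht : t < a := Finset.mem_range.mp htm
    rw [bit_low _ _ ht, bit_low _ _ ht, bit_allones ht]
  rw [Finset.prod_congr rfl hfst]
  by_cases hr : r.val = 2 ^ a - 1
  · rw [if_pos hr]
    have h1 : ∀ t ∈ Finset.range a, arikanKernel R (bit t r.val) 1 = 1 := by
      intro t htm
      rw [hr, bit_allones (Finset.mem_range.mp htm), arikan_one_one]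
    rw [Finset.prod_congr rfl h1, Finset.prod_const_one, one_mul]
  · rw [if_neg hr]
    have hex : ∃ t < a, bit t r.val ≠ 1 := by
      by_contra hcon
      push_neg at hcon
      exact hr (eq_allones r.isLt hcon)
    obtain ⟨t, hta, hbt⟩ := hex
    have hb0 : bit t r.val = 0 := by
      apply Fin.ext
      have hlt := (bit t r.val).isLt
      have hne : (bit t r.val).val ≠ 1 := fun hv => hbt (Fin.ext hv)
      omega
    have hz : (∏ t ∈ Finset.range a, arikanKernel R (bit t r.val) 1) = 0 :=
      Finset.prod_eq_zero (Finset.mem_range.mpr hta) (by rw [hb0, arikan_zero_one])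
    rw [hz, zero_mul]

lemma polar_zero_of_lt {R : Type*} [CommSemiring R] {m : ℕ} {i j : Fin (2 ^ m)}
    (hij : i < j) : polarG R m i j = 0 := by
  have hex : ∃ t < m, j.val.testBit t = true ∧ i.val.testBit t = false := by
    by_contra hc
    push_neg at hc
    have hand : j.val &&& i.val = j.val := by
      apply Nat.eq_of_testBit_eq
      intro t
      rw [Nat.testBit_and]
      rcases lt_or_ge t m with h1 | h1
      · cases hjt : j.val.testBit t
        · simp
        · have hit : i.val.testBit t = true := by
            have := hc t h1 hjt
            simpa using this
          simp [hit]
      · have hjf : j.val.testBit t = false :=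
          Nat.testBit_lt_two_pow
            (lt_of_lt_of_le j.isLt (Nat.pow_le_pow_right (by norm_num) h1))
        rw [hjf, Bool.false_and]
    have hle : j.val ≤ i.val := hand ▸ Nat.and_le_right
    have : i.val < j.val := hij
    omega
  obtain ⟨t, htm, hjt, hit⟩ := hex
  unfold polarG
  apply Finset.prod_eq_zero (Finset.mem_range.mpr htm)
  have hbj : bit t j.val = 1 := by
    rw [Nat.testBit_eq_decide_div_mod_eq] at hjt
    apply Fin.ext
    simpa [bit_val] using hjt
  have hbi : bit t i.val = 0 := by
    rw [Nat.testBit_eq_decide_div_mod_eq] at hit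
    apply Fin.ext
    have h2 : i.val / 2 ^ t % 2 < 2 := Nat.mod_lt _ (by norm_num)
    simp only [decide_eq_false_iff_not] at hit
    simp only [bit_val, Fin.val_zero]
    omega
  rw [hbi, hbj, arikan_zero_one]

lemma polar_det_isUnit (Fq : Type*) [Field Fq] (m : ℕ) :
    IsUnit (polarG Fq m).det := by
  have hbt : (polarG Fq m).BlockTriangular OrderDual.toDual := by
    intro i j hij
    exact polar_zero_of_lt (by exact_mod_cast hij)
  have hdet : (polarG Fq m).det = 1 := by
    rw [Matrix.det_of_lowerTriangular _ hbt]
    apply Finset.prod_eq_one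
    intro i _
    unfold polarG
    apply Finset.prod_eq_one
    intro t _
    exact arikan_diag _
  rw [hdet]
  exact isUnit_one

lemma mul_polar_submatrix {K n a : ℕ} (ha : a ≤ n) {R : Type*} [CommSemiring R]
    (A : Matrix (Fin K) (Fin (2 ^ n)) R) :
    (A * polarG R n).submatrix id (dIdx ha) =
      A.submatrix id (dIdx ha) * polarG R (n - a) := by
  ext k j
  simp only [Matrix.submatrix_apply, id_eq, Matrix.mul_apply]
  rw [← Equiv.sum_comp (pairEquiv ha)
    (fun i => A k i * polarG R n i (dIdx ha j)), Fintype.sum_prod_type]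
  apply Finset.sum_congr rfl
  intro q _
  have h2 : (0:ℕ) < 2 ^ a := pow_pos (by norm_num) a
  rw [Finset.sum_eq_single (⟨2 ^ a - 1, by omega⟩ : Fin (2 ^ a))]
  · rw [polar_pair, if_pos rfl]
    have he : pairEquiv ha (q, (⟨2 ^ a - 1, by omega⟩ : Fin (2 ^ a))) = dIdx ha q :=
      Fin.ext rfl
    rw [he]
  · intro r _ hne
    rw [polar_pair, if_neg (fun hv => hne (Fin.ext hv)), mul_zero]
  · intro habs
    exact absurd (Finset.mem_univ _) habs

lemma mul_left_submatrix {K N : ℕ} {α : Type*} {R : Type*} [CommSemiring R] [Fintype α]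
    (E : Matrix (Fin K) (Fin K) R) (B : Matrix (Fin K) (Fin N) R) (f : α → Fin N) :
    (E * B).submatrix id f = E * B.submatrix id f := by
  ext k j
  simp [Matrix.mul_apply]

/-- With `M = E·G·P⁻¹·G_p` (where `E` is invertible, `P` is a permutation matrix and
`G_p = F^{⊗n}` is the polar transform over `F_2` embedded into `F_{2^n}`),
`rank (M^D) = rank ((G·P⁻¹)^D)`, where `(·)^D` takes the submatrix of columns indexed by
`D = {2^a−1, 2·2^a−1, …, 2^n−1}` and `0 ≤ a ≤ n`. -/
theorem rank_pretransformed_eq_rank_GPinv {n K a : ℕ} (ha : a ≤ n)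
    (Fq : Type*) [Field Fq] [Fintype Fq] [DecidableEq Fq]
    (hcard : Fintype.card Fq = 2 ^ n)
    (G : Matrix (Fin K) (Fin (2 ^ n)) Fq)
    (σ : Equiv.Perm (Fin (2 ^ n)))
    (E : Matrix (Fin K) (Fin K) Fq) (hE : IsUnit E)
    (M : Matrix (Fin K) (Fin (2 ^ n)) Fq)
    (hM : M = E * G * (σ.permMatrix Fq)⁻¹ * polarG Fq n) :
    (M.submatrix id (dIdx ha)).rank =
      ((G * (σ.permMatrix Fq)⁻¹).submatrix id (dIdx ha)).rank := by
  have h1 : E * G * (σ.permMatrix Fq)⁻¹ = E * (G * (σ.permMatrix Fq)⁻¹) :=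
    Matrix.mul_assoc E G _
  rw [hM, h1, mul_polar_submatrix ha, mul_left_submatrix,
    Matrix.rank_mul_eq_left_of_isUnit_det _ _ (polar_det_isUnit Fq (n - a)),
    Matrix.rank_mul_eq_right_of_isUnit_det _ _ ((Matrix.isUnit_iff_isUnit_det E).mp hE)]
end
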